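/- arXiv:2501.05105 — 2 statements merged into one kernel-verified Lean document; each statement's English description precedes it below -/
import Mathlib

section
/- Let μ ∈ ℝᵖ and let μ̂₁,...,μ̂ᴷ ∈ ℝᵖ. Suppose strictly more than K/2 of the μ̂ⱼ, say those with index j ∈ J with |J| = ⌈(1-α)K⌉ for some α < 1/2, satisfy ‖μ̂ⱼ - μ‖₂ ≤ ε. Then the geometric median m of μ̂₁,...,μ̂ᴷ satisfies ‖m - μ‖₂ ≤ C_α ε with C_α = (1-α)/√(1-2α). -/
/-!
Write `R = ‖m - μ‖` and suppose `ε < R`. Moving `m` a small step `t` towards `μ` changes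
`‖μ̂ⱼ - m‖` by `-t cos θⱼ + O(t²)` when `μ̂ⱼ ≠ m` and by at most `t` otherwise, where `θⱼ` is the
angle at `m` between `μ̂ⱼ` and `μ`; minimality of `m` therefore forces `∑_{j ∈ J} cos θⱼ ≤ |Jᶜ|`.
A good point lies in the ball of radius `ε` about `μ`, which is seen from `m` under a half-angle
with cosine `√(R² - ε²) / R`, so `(1 - α) √(R² - ε²) ≤ α R`, which rearranges to `R ≤ C_α ε`.
-/

open Finset Filter Topology
open scoped RealInnerProductSpace

theorem le_of_forall_pos_le_add_mul {a b c : ℝ} (h : ∀ t > 0, a ≤ b + c * t) : a ≤ b := by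
  have hlim : Tendsto (fun t => b + c * t) (𝓝[>] 0) (𝓝 b) :=
    ((continuous_const.add (continuous_const.mul continuous_id)).tendsto' 0 b
      (by simp)).mono_left nhdsWithin_le_nhds
  exact ge_of_tendsto hlim (eventually_nhdsWithin_of_forall h)

section InnerProductSpace

variable {E : Type*} [NormedAddCommGroup E] [InnerProductSpace ℝ E]

theorem norm_mul_norm_sub_le (a v : E) : ‖a‖ * ‖a - v‖ ≤ ‖a‖ ^ 2 - ⟪a, v⟫ + ‖v‖ ^ 2 / 2 := by
  nlinarith [sq_nonneg (‖a‖ - ‖a - v‖), norm_sub_sq_real a v]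

theorem norm_sub_smul_le {a : E} (ha : a ≠ 0) (v : E) (t : ℝ) :
    ‖a - t • v‖ ≤ ‖a‖ - t * (⟪a, v⟫ / ‖a‖) + t ^ 2 * (‖v‖ ^ 2 / (2 * ‖a‖)) := by
  have ha' : 0 < ‖a‖ := norm_pos_iff.2 ha
  have h := norm_mul_norm_sub_le a (t • v)
  rw [inner_smul_right, norm_smul, mul_pow, Real.norm_eq_abs, sq_abs] at h
  rw [← mul_le_mul_iff_right₀ ha']
  field_simp
  nlinarith

theorem norm_mul_sqrt_sq_sub_sq_le_inner {a w : E} {ε : ℝ} (h : ‖a - w‖ ≤ ε) (hε : ε ≤ ‖w‖) :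
    ‖a‖ * √(‖w‖ ^ 2 - ε ^ 2) ≤ ⟪a, w⟫ := by
  have hε0 : 0 ≤ ε := (norm_nonneg _).trans h
  have hs := Real.sq_sqrt (sub_nonneg.2 (pow_le_pow_left₀ hε0 hε 2))
  nlinarith [sq_nonneg (‖a‖ - √(‖w‖ ^ 2 - ε ^ 2)), norm_sub_sq_real a w, norm_nonneg (a - w)]

theorem IsMinOn.sum_inner_div_norm_le {ι : Type*} [Fintype ι] [DecidableEq ι] {x : ι → E} {m : E}
    (hmin : IsMinOn (fun z => ∑ j, ‖x j - z‖) Set.univ m) {S : Finset ι}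
    (hS : ∀ j ∈ S, x j ≠ m) (v : E) :
    ∑ j ∈ S, ⟪x j - m, v⟫ / ‖x j - m‖ ≤ #Sᶜ * ‖v‖ := by
  refine le_of_forall_pos_le_add_mul (c := ∑ j ∈ S, ‖v‖ ^ 2 / (2 * ‖x j - m‖)) fun t ht => ?_
  have hS_le : ∑ j ∈ S, ‖x j - (m + t • v)‖ ≤ ∑ j ∈ S, ‖x j - m‖
      - t * ∑ j ∈ S, ⟪x j - m, v⟫ / ‖x j - m‖
      + t ^ 2 * ∑ j ∈ S, ‖v‖ ^ 2 / (2 * ‖x j - m‖) := by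
    rw [mul_sum, mul_sum, ← sum_sub_distrib, ← sum_add_distrib]
    exact sum_le_sum fun j hj => by
      rw [← sub_sub]; exact norm_sub_smul_le (sub_ne_zero.2 (hS j hj)) v t
  have hSc_le : ∑ j ∈ Sᶜ, ‖x j - (m + t • v)‖ ≤ ∑ j ∈ Sᶜ, ‖x j - m‖ + #Sᶜ * (t * ‖v‖) := by
    rw [← nsmul_eq_mul, ← sum_const, ← sum_add_distrib]
    exact sum_le_sum fun j _ => by
      rw [← sub_sub, ← norm_smul_of_nonneg ht.le]; exact norm_sub_le _ _
  have hF := hmin (Set.mem_univ (m + t • v))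
  simp only [Set.mem_ofPred_eq, ← sum_add_sum_compl S] at hF
  refine le_of_mul_le_mul_left ?_ ht
  linear_combination hF + hS_le + hSc_le

end InnerProductSpace

theorem le_div_sqrt_mul_of_mul_sqrt_le {α R ε : ℝ} (hα : α < 1 / 2) (hε : 0 ≤ ε) (hεR : ε ≤ R)
    (h : (1 - α) * √(R ^ 2 - ε ^ 2) ≤ α * R) : R ≤ (1 - α) / √(1 - 2 * α) * ε := by
  have hpos : 0 < √(1 - 2 * α) := Real.sqrt_pos.2 (by linarith)
  rw [div_mul_eq_mul_div, le_div_iff₀ hpos]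
  have hs := Real.sq_sqrt (sub_nonneg.2 (pow_le_pow_left₀ hε hεR 2))
  have hsq : (1 - α) ^ 2 * (R ^ 2 - ε ^ 2) ≤ (α * R) ^ 2 := by
    rw [← hs, ← mul_pow]
    exact pow_le_pow_left₀ (mul_nonneg (by linarith) (Real.sqrt_nonneg _)) h 2
  refine (pow_le_pow_iff_left₀ (mul_nonneg (hε.trans hεR) hpos.le) (mul_nonneg (by linarith) hε)
    two_ne_zero).1 ?_
  rw [mul_pow, Real.sq_sqrt (by linarith)]
  nlinarith [sq_nonneg α]

theorem one_le_div_sqrt_one_sub_two_mul {α : ℝ} (hα : α < 1 / 2) : 1 ≤ (1 - α) / √(1 - 2 * α) := by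
  rw [one_le_div (Real.sqrt_pos.2 (by linarith)), Real.sqrt_le_left (by linarith)]
  nlinarith [sq_nonneg α]

theorem geometric_median_aggregation_deterministic_general
    {p K : ℕ} (hK : 0 < K) (μhat : Fin K → EuclideanSpace ℝ (Fin p))
    (μ : EuclideanSpace ℝ (Fin p)) (α ε : ℝ) (hα : α < 1 / 2)
    (J : Finset (Fin K)) (hJcard : J.card = ⌈(1 - α) * (K : ℝ)⌉₊)
    (hJ : ∀ j ∈ J, ‖μhat j - μ‖ ≤ ε)
    (m : EuclideanSpace ℝ (Fin p))
    (hmin : IsMinOn (fun z : EuclideanSpace ℝ (Fin p) => ∑ j, ‖μhat j - z‖) Set.univ m) :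
    ‖m - μ‖ ≤ (1 - α) / Real.sqrt (1 - 2 * α) * ε := by
  have hK' : (0 : ℝ) < K := Nat.cast_pos.2 hK
  obtain ⟨j₀, hj₀⟩ : J.Nonempty := card_pos.1 (hJcard ▸ Nat.ceil_pos.2 (by nlinarith))
  have hε : 0 ≤ ε := (norm_nonneg _).trans (hJ j₀ hj₀)
  rcases le_or_gt ‖m - μ‖ ε with hle | hlt
  · exact hle.trans (le_mul_of_one_le_left hε (one_le_div_sqrt_one_sub_two_mul hα))
  rw [norm_sub_rev] at hlt ⊢
  set s := √(‖μ - m‖ ^ 2 - ε ^ 2)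
  have hne : ∀ j ∈ J, μhat j ≠ m := fun j hj h =>
    hlt.not_ge (by simpa [h, norm_sub_rev] using hJ j hj)
  have hcos : ∀ j ∈ J, s ≤ ⟪μhat j - m, μ - m⟫ / ‖μhat j - m‖ := fun j hj => by
    rw [le_div_iff₀' (norm_pos_iff.2 (sub_ne_zero.2 (hne j hj)))]
    refine norm_mul_sqrt_sq_sub_sq_le_inner ?_ hlt.le
    simpa using hJ j hj
  have hsum : #J * s ≤ #Jᶜ * ‖μ - m‖ := by
    rw [← nsmul_eq_mul, ← sum_const]
    exact (sum_le_sum hcos).trans (hmin.sum_inner_div_norm_le hne _)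
  have hJK : (1 - α) * K ≤ #J := hJcard ▸ Nat.le_ceil _
  have hJc : (#Jᶜ : ℝ) = K - #J := by
    rw [card_compl, Nat.cast_sub (card_le_univ J), Fintype.card_fin]
  refine le_div_sqrt_mul_of_mul_sqrt_le hα hε hlt.le (le_of_mul_le_mul_left ?_ hK')
  calc (K : ℝ) * ((1 - α) * s) = (1 - α) * K * s := by ring
    _ ≤ #J * s := by gcongr
    _ ≤ (K - #J) * ‖μ - m‖ := hJc ▸ hsum
    _ ≤ K * (α * ‖μ - m‖) := by nlinarith [norm_nonneg (μ - m)]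

/-- Deterministic core of Minsker's aggregation lemma: if a `(1-α)`-majority of the points
`μ̂₁,...,μ̂ᴷ` (with `α < 1/2`) lies within distance `ε` of `μ`, then the geometric median `m`
satisfies `‖m - μ‖₂ ≤ C_α ε` with `C_α = (1-α)/√(1-2α)`. -/
theorem geometric_median_aggregation_deterministic
    {p K : ℕ} (hK : 0 < K) (μhat : Fin K → EuclideanSpace ℝ (Fin p))
    (μ : EuclideanSpace ℝ (Fin p)) (α ε : ℝ) (hα0 : 0 ≤ α) (hα : α < 1 / 2)
    (J : Finset (Fin K)) (hJcard : J.card = ⌈(1 - α) * (K : ℝ)⌉₊)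
    (hJ : ∀ j ∈ J, ‖μhat j - μ‖ ≤ ε)
    (m : EuclideanSpace ℝ (Fin p))
    (hmin : IsMinOn (fun z : EuclideanSpace ℝ (Fin p) => ∑ j, ‖μhat j - z‖) Set.univ m) :
    ‖m - μ‖ ≤ (1 - α) / Real.sqrt (1 - 2 * α) * ε :=
  geometric_median_aggregation_deterministic_general hK μhat μ α ε hα J hJcard hJ m hmin
end

section
/- Let μ̂₁,...,μ̂ᴷ ∈ ℝᵖ and let m be their geometric median. If a point z ∈ ℝᵖ satisfies ‖z - m‖₂ > C_α r with C_α = (1-α)/√(1-2α) for some 0 ≤ α < 1/2 and r > 0, then at least αK of the points μ̂ⱼ satisfy ‖μ̂ⱼ - z‖₂ > r. -/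
open Finset

open RealInnerProductSpace

lemma geom_aux {E : Type*} [NormedAddCommGroup E] [InnerProductSpace ℝ E]
    (d w : E) (r t T : ℝ) (hr : 0 < r) (hrT : r < T) (ht : 0 < t)
    (hw : ‖w‖ = T) (hball : ‖d - w‖ ≤ r) :
    ‖d - (t / T) • w‖ ≤ ‖d‖ - t * (Real.sqrt (T ^ 2 - r ^ 2) / T)
      + t ^ 2 / (2 * (T - r)) := by
  have hT : 0 < T := lt_trans hr hrT
  have hdlb : T - r ≤ ‖d‖ := by
    have h1 : ‖w‖ - ‖d‖ ≤ ‖w - d‖ := norm_sub_norm_le w d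
    rw [norm_sub_rev] at h1
    linarith [hw ▸ h1]
  have hdpos : 0 < ‖d‖ := by linarith
  have hX : (0:ℝ) ≤ T ^ 2 - r ^ 2 := by nlinarith
  set s := Real.sqrt (T ^ 2 - r ^ 2) with hs_def
  have hs2 : s ^ 2 = T ^ 2 - r ^ 2 := Real.sq_sqrt hX
  have hs0 : 0 ≤ s := Real.sqrt_nonneg _
  have hip : (‖d‖ ^ 2 + T ^ 2 - r ^ 2) / 2 ≤ (inner ℝ d w : ℝ) := by
    have h2 : ‖d - w‖ ^ 2 ≤ r ^ 2 := by
      nlinarith [norm_nonneg (d - w)]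
    have h3 : ‖d - w‖ ^ 2 = ‖d‖ ^ 2 - 2 * (inner ℝ d w : ℝ) + ‖w‖ ^ 2 := norm_sub_sq_real d w
    rw [hw] at h3
    linarith
  have hipc : ‖d‖ * s ≤ (inner ℝ d w : ℝ) := by nlinarith [sq_nonneg (‖d‖ - s)]
  set N := ‖d - (t / T) • w‖ with hN_def
  have hN0 : 0 ≤ N := norm_nonneg _
  have hN2 : N ^ 2 = ‖d‖ ^ 2 - 2 * (t / T) * (inner ℝ d w : ℝ) + t ^ 2 := by
    have h5 : N ^ 2 = ‖d‖ ^ 2 - 2 * (inner ℝ d ((t / T) • w) : ℝ) + ‖(t / T) • w‖ ^ 2 :=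
      norm_sub_sq_real d ((t / T) • w)
    rw [real_inner_smul_right, norm_smul, hw] at h5
    rw [h5, Real.norm_eq_abs, abs_of_pos (by positivity : (0:ℝ) < t / T)]
    field_simp
  set γ := t ^ 2 / (2 * (T - r)) with hγ_def
  have hTr : (0:ℝ) < T - r := by linarith
  have hγ0 : 0 ≤ γ := by positivity
  have hγ : t ^ 2 = 2 * (T - r) * γ := by
    rw [hγ_def]
    field_simp
  set τ := t / T with hτ_def
  have hτ0 : 0 < τ := by positivity
  have hτT : τ * T = t := by rw [hτ_def]; field_simp
  have hc : t * (s / T) = τ * s := by rw [hτ_def]; ring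
  rw [hc]
  -- goal : N ≤ ‖d‖ - τ * s + γ
  nlinarith [sq_nonneg (N - ‖d‖), mul_le_mul_of_nonneg_left hipc (le_of_lt hτ0),
    mul_nonneg hγ0 (sub_nonneg.mpr hdlb), mul_pos hdpos hT, hN2,
    mul_pos hτ0 hdpos]

set_option maxHeartbeats 1000000 in
/-- Minsker's majority lemma for the geometric median: if `m` is the geometric median of
`μ̂₁,...,μ̂ᴷ` and `z` satisfies `‖z - m‖₂ > C_α r` with `C_α = (1-α)/√(1-2α)`, then at least
`αK` of the points `μ̂ⱼ` satisfy `‖μ̂ⱼ - z‖₂ > r`. -/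
theorem geometric_median_majority
    {p K : ℕ} (μhat : Fin K → EuclideanSpace ℝ (Fin p))
    (m : EuclideanSpace ℝ (Fin p))
    (hmin : IsMinOn (fun y : EuclideanSpace ℝ (Fin p) => ∑ j, ‖μhat j - y‖) Set.univ m)
    (α r : ℝ) (hα0 : 0 ≤ α) (hα : α < 1 / 2) (hr : 0 < r)
    (z : EuclideanSpace ℝ (Fin p))
    (hfar : (1 - α) / Real.sqrt (1 - 2 * α) * r < ‖z - m‖) :
    α * K ≤ (Finset.univ.filter (fun j => r < ‖μhat j - z‖)).card := by
  set T : ℝ := ‖z - m‖ with hT_def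
  have h2α : (0:ℝ) < 1 - 2 * α := by linarith
  set q : ℝ := Real.sqrt (1 - 2 * α) with hq_def
  have hq2 : q ^ 2 = 1 - 2 * α := Real.sq_sqrt h2α.le
  have hq0 : 0 < q := Real.sqrt_pos.mpr h2α
  have hq1 : q ≤ 1 - α := by nlinarith
  have hCα1 : r ≤ (1 - α) / q * r := by
    have : (1:ℝ) ≤ (1 - α) / q := (one_le_div hq0).mpr hq1
    nlinarith
  have hrT : r < T := lt_of_le_of_lt hCα1 hfar
  have hT : 0 < T := lt_trans hr hrT
  have hX : (0:ℝ) ≤ T ^ 2 - r ^ 2 := by nlinarith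
  set c : ℝ := Real.sqrt (T ^ 2 - r ^ 2) / T with hc_def
  have hsq : Real.sqrt (T ^ 2 - r ^ 2) ^ 2 = T ^ 2 - r ^ 2 := Real.sq_sqrt hX
  have hs0 : 0 ≤ Real.sqrt (T ^ 2 - r ^ 2) := Real.sqrt_nonneg _
  have hc0 : 0 ≤ c := by positivity
  -- α ≤ c * (1 - α)
  have hcα : α ≤ c * (1 - α) := by
    have hfar' : (1 - α) * r < T * q := by
      rw [div_mul_eq_mul_div, div_lt_iff₀ hq0] at hfar
      linarith [hfar]
    have h0 : ((1 - α) * r) ^ 2 < (T * q) ^ 2 :=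
      pow_lt_pow_left₀ hfar' (mul_nonneg (by linarith) hr.le) two_ne_zero
    have hTq : (T * q) ^ 2 = T ^ 2 * (1 - 2 * α) := by rw [mul_pow, hq2]
    have hss : ((1 - α) * Real.sqrt (T ^ 2 - r ^ 2)) ^ 2
        = (1 - α) ^ 2 * (T ^ 2 - r ^ 2) := by rw [mul_pow, hsq]
    have h1 : (α * T) ^ 2 < ((1 - α) * Real.sqrt (T ^ 2 - r ^ 2)) ^ 2 := by
      nlinarith [h0, hTq, hss]
    have h2 : α * T < (1 - α) * Real.sqrt (T ^ 2 - r ^ 2) := by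
      nlinarith [mul_nonneg hα0 hT.le, mul_nonneg (by linarith : (0:ℝ) ≤ 1 - α) hs0]
    rw [hc_def, div_mul_eq_mul_div, le_div_iff₀ hT]
    nlinarith
  set J := Finset.univ.filter (fun j => ‖μhat j - z‖ ≤ r) with hJ_def
  set G := Finset.univ.filter (fun j => r < ‖μhat j - z‖) with hG_def
  have hcard : J.card + G.card = K := by
    have hGeq : G = Finset.univ.filter (fun j => ¬ (‖μhat j - z‖ ≤ r)) := by
      rw [hG_def]
      apply Finset.filter_congr
      intro j _
      simp [not_le]
    rw [hGeq, hJ_def, Finset.card_filter_add_card_filter_not, Finset.card_univ,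
      Fintype.card_fin]
  set w : EuclideanSpace ℝ (Fin p) := z - m with hw_def
  have hwT : ‖w‖ = T := rfl
  -- key inequality for each t > 0
  have key : ∀ t : ℝ, 0 < t →
      (J.card : ℝ) * c ≤ (G.card : ℝ) + (J.card : ℝ) * (t / (2 * (T - r))) := by
    intro t ht
    have hmin' : ∑ j, ‖μhat j - m‖ ≤ ∑ j, ‖μhat j - (m + (t / T) • w)‖ :=
      hmin (Set.mem_univ (m + (t / T) • w))
    have hmin'' : ∑ j, ‖μhat j - m‖ ≤ ∑ j, ‖(μhat j - m) - (t / T) • w‖ := by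
      have he : ∑ j, ‖μhat j - (m + (t / T) • w)‖ = ∑ j, ‖(μhat j - m) - (t / T) • w‖ := by
        apply Finset.sum_congr rfl
        intro j _
        congr 1
        abel
      rw [← he]
      exact hmin'
    have h1 : ∀ j ∈ J, ‖(μhat j - m) - (t / T) • w‖ ≤
        ‖μhat j - m‖ + (t ^ 2 / (2 * (T - r)) - t * c) := by
      intro j hj
      rw [hJ_def, Finset.mem_filter] at hj
      have hball : ‖(μhat j - m) - w‖ ≤ r := by
        have he2 : (μhat j - m) - w = μhat j - z := by rw [hw_def]; abel
        rw [he2]; exact hj.2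
      have := geom_aux (μhat j - m) w r t T hr hrT ht hwT hball
      rw [hc_def]; linarith
    have h2 : ∀ j ∈ Finset.univ.filter (fun j => ¬ (‖μhat j - z‖ ≤ r)),
        ‖(μhat j - m) - (t / T) • w‖ ≤ ‖μhat j - m‖ + t := by
      intro j _
      have hb := norm_sub_le (μhat j - m) ((t / T) • w)
      have hn : ‖(t / T) • w‖ = t := by
        rw [norm_smul, hwT, Real.norm_eq_abs, abs_of_pos (by positivity : (0:ℝ) < t / T)]
        field_simp
      rw [hn] at hb
      exact hb
    have hsplit1 := Finset.sum_filter_add_sum_filter_not Finset.univ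
      (fun j => ‖μhat j - z‖ ≤ r) (fun j => ‖(μhat j - m) - (t / T) • w‖)
    have hsplit2 := Finset.sum_filter_add_sum_filter_not Finset.univ
      (fun j => ‖μhat j - z‖ ≤ r) (fun j => ‖μhat j - m‖)
    rw [← hJ_def] at hsplit1 hsplit2
    have hb1 : ∑ j ∈ J, ‖(μhat j - m) - (t / T) • w‖ ≤
        ∑ j ∈ J, ‖μhat j - m‖ + (J.card : ℝ) * (t ^ 2 / (2 * (T - r)) - t * c) := by
      calc ∑ j ∈ J, ‖(μhat j - m) - (t / T) • w‖
          ≤ ∑ j ∈ J, (‖μhat j - m‖ + (t ^ 2 / (2 * (T - r)) - t * c)) :=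
            Finset.sum_le_sum h1
        _ = ∑ j ∈ J, ‖μhat j - m‖ + (J.card : ℝ) * (t ^ 2 / (2 * (T - r)) - t * c) := by
            rw [Finset.sum_add_distrib, Finset.sum_const, nsmul_eq_mul]
    have hGcard : (Finset.univ.filter (fun j => ¬ (‖μhat j - z‖ ≤ r))).card = G.card := by
      congr 1
      rw [hG_def]
      apply Finset.filter_congr
      intro j _
      simp [not_le]
    have hb2 : ∑ j ∈ Finset.univ.filter (fun j => ¬ (‖μhat j - z‖ ≤ r)),
        ‖(μhat j - m) - (t / T) • w‖ ≤
        ∑ j ∈ Finset.univ.filter (fun j => ¬ (‖μhat j - z‖ ≤ r)), ‖μhat j - m‖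
          + (G.card : ℝ) * t := by
      calc ∑ j ∈ Finset.univ.filter (fun j => ¬ (‖μhat j - z‖ ≤ r)),
            ‖(μhat j - m) - (t / T) • w‖
          ≤ ∑ j ∈ Finset.univ.filter (fun j => ¬ (‖μhat j - z‖ ≤ r)),
            (‖μhat j - m‖ + t) := Finset.sum_le_sum h2
        _ = ∑ j ∈ Finset.univ.filter (fun j => ¬ (‖μhat j - z‖ ≤ r)), ‖μhat j - m‖
            + (G.card : ℝ) * t := by
            rw [Finset.sum_add_distrib, Finset.sum_const, nsmul_eq_mul, hGcard]
    have hcomb : 0 ≤ (J.card : ℝ) * (t ^ 2 / (2 * (T - r)) - t * c) + (G.card : ℝ) * t := by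
      rw [← hsplit1, ← hsplit2] at hmin''
      linarith
    have hx : 0 ≤ t * ((J.card : ℝ) * (t / (2 * (T - r))) - (J.card : ℝ) * c
        + (G.card : ℝ)) := by
      linear_combination hcomb
    have hy := nonneg_of_mul_nonneg_right hx ht
    linarith
  -- pass to limit t → 0
  by_cases hJ0 : J.card = 0
  · have hGK : (G.card : ℝ) = K := by
      have h : G.card = K := by omega
      exact_mod_cast h
    rw [hGK]
    nlinarith [Nat.cast_nonneg (α := ℝ) K]
  · have hJpos : (0:ℝ) < J.card := by
      have : 0 < J.card := Nat.pos_of_ne_zero hJ0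
      exact_mod_cast this
    have hTr : (0:ℝ) < T - r := by linarith
    have hlim : (J.card : ℝ) * c ≤ (G.card : ℝ) := by
      apply le_of_forall_pos_le_add
      intro ε hε
      have ht : (0:ℝ) < 2 * (T - r) * ε / J.card := by positivity
      have hk := key _ ht
      have heq : (J.card : ℝ) * ((2 * (T - r) * ε / J.card) / (2 * (T - r))) = ε := by
        field_simp
      linarith [hk, heq]
    have hcardR : (J.card : ℝ) + (G.card : ℝ) = K := by exact_mod_cast hcard
    nlinarith [mul_nonneg (by linarith : (0:ℝ) ≤ 1 - α) (sub_nonneg.mpr hlim),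
      mul_nonneg hJpos.le (sub_nonneg.mpr hcα)]
end
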